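/- Let (μ_n)_{n∈ℕ} be a sequence in 𝐌 and μ_∞ ∈ 𝐌 with W₁(μ_n, μ_∞) → 0. Then: (1) L_{μ_n} → L_{μ_∞} uniformly on [0,1]; (2) G(μ_n) → G(μ_∞); (3) H(μ_n) → H(μ_∞). -/

import Mathlib

open MeasureTheory Filter Topology

noncomputable section

/-- The mean of a measure on `ℝ`. -/
def mMean (μ : Measure ℝ) : ℝ := ∫ x, x ∂μ

/-- `μ ∈ 𝐌`: a Borel probability measure on `ℝ₊` (modelled as a measure on `ℝ` giving no
mass to negative numbers) with finite nonzero mean. -/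
def MemM (μ : Measure ℝ) : Prop :=
  IsProbabilityMeasure μ ∧ μ {x | x < 0} = 0 ∧ Integrable id μ ∧ 0 < mMean μ

/-- The cumulative distribution function `F_μ(x) = μ([0,x])`. -/
def cdfR (μ : Measure ℝ) (x : ℝ) : ℝ := (μ (Set.Icc 0 x)).toReal

/-- The quantile function `Q_μ(p) = inf {x ∈ ℝ₊ : F_μ(x) ≥ p}`. -/
def quant (μ : Measure ℝ) (p : ℝ) : ℝ := sInf {x : ℝ | 0 ≤ x ∧ p ≤ cdfR μ x}

/-- The Lorenz function `L_μ(p) = (∫_0^p Q_μ(t) dt) / m_μ`. -/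
def lorenz (μ : Measure ℝ) (p : ℝ) : ℝ := (∫ t in (0:ℝ)..p, quant μ t) / mMean μ

/-- The pseudo-Lorenz function `Λ_μ(p) = (∫_{[0,Q_μ(p)]} u dμ(u)) / m_μ` for `p ∈ [0,1)`,
with `Λ_μ(1) = 1`. -/
def pseudoLorenz (μ : Measure ℝ) (p : ℝ) : ℝ :=
  if p = 1 then 1 else (∫ u in Set.Icc (0:ℝ) (quant μ p), u ∂μ) / mMean μ

/-- The Gini coefficient `G(μ) = (∫∫ |x-y| d(μ⊗μ)) / (2 m_μ)`. -/
def gini (μ : Measure ℝ) : ℝ := (∫ z : ℝ × ℝ, |z.1 - z.2| ∂(μ.prod μ)) / (2 * mMean μ)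

/-- The Hoover coefficient `H(μ) = (∫ |x - m_μ| dμ) / (2 m_μ)`. -/
def hoover (μ : Measure ℝ) : ℝ := (∫ x, |x - mMean μ| ∂μ) / (2 * mMean μ)

/-- The Wasserstein-1 distance `W₁(μ,ν) = ∫_0^1 |Q_μ - Q_ν|`. -/
def W1 (μ ν : Measure ℝ) : ℝ := ∫ t in (0:ℝ)..1, |quant μ t - quant ν t|

/-- Weak convergence of a sequence of measures: convergence of integrals of all bounded
continuous functions. -/
def WeakCv (μs : ℕ → Measure ℝ) (ν : Measure ℝ) : Prop :=
  ∀ f : ℝ → ℝ, Continuous f → (∃ C : ℝ, ∀ x, |f x| ≤ C) →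
    Tendsto (fun n => ∫ x, f x ∂(μs n)) atTop (𝓝 (∫ x, f x ∂ν))

/-- Uniform integrability of a family of measures on `ℝ₊`:
`sup_i ∫_{(α,∞)} x dμ_i(x) → 0` as `α → +∞`. -/
def UnifInt {ι : Type*} (μs : ι → Measure ℝ) : Prop :=
  ∀ ε > (0:ℝ), ∃ A : ℝ, ∀ α ≥ A, ∀ i, (∫ x in Set.Ioi α, x ∂(μs i)) ≤ ε

end

/-!
Under Lebesgue measure on `(0, 1]` the quantile function `Q_μ` has law `μ`, so
`W₁(μ, ν) = ∫₀¹ |Q_μ - Q_ν|` is the `L¹` distance of a coupling of `μ` and `ν`. Computing the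
means, the Gini numerators `∫∫ |x - y|` and the Hoover numerators `∫ |x - m|` through this
coupling, the pointwise triangle inequality shows that each moves by at most `2 W₁`; likewise
`|L_μ(p) - L_ν(p)| ≤ 2 W₁(μ, ν) / m_ν` uniformly in `p`. Since the means converge to `m_ν > 0`,
the ratios converge.
-/

open Set ProbabilityTheory

section Quantile

variable {μ : Measure ℝ}

lemma MemM.ae_nonneg (hμ : MemM μ) : ∀ᵐ x ∂μ, 0 ≤ x := by
  simpa [ae_iff, not_le] using hμ.2.1

lemma cdfR_eq_cdf (hμ : MemM μ) : cdfR μ = cdf μ := by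
  have := hμ.1
  funext x
  have hIcc : Icc 0 x =ᵐ[μ] Iic x := by
    filter_upwards [hμ.ae_nonneg] with y hy
    change (y ∈ Icc 0 x) = (y ∈ Iic x)
    simp [hy]
  rw [cdfR, cdf_eq_real, measureReal_def, measure_congr hIcc]

lemma quant_nonneg (μ : Measure ℝ) (p : ℝ) : 0 ≤ quant μ p :=
  Real.sInf_nonneg fun _ hx => hx.1

lemma quant_le_iff (hμ : MemM μ) {p : ℝ} (hp₀ : 0 < p) (hp₁ : p < 1) (y : ℝ) :
    quant μ p ≤ y ↔ p ≤ cdf μ y := by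
  have := hμ.1
  rw [quant, cdfR_eq_cdf hμ]
  set S := {x : ℝ | 0 ≤ x ∧ p ≤ cdf μ x}
  have hbdd : BddBelow S := ⟨0, fun _ hx => hx.1⟩
  have hne : S.Nonempty := by
    obtain ⟨x, hx, hx₀⟩ := (((tendsto_cdf_atTop μ).eventually (eventually_gt_nhds hp₁)).and
      (eventually_ge_atTop 0)).exists
    exact ⟨x, hx₀, hx.le⟩
  -- every point to the right of `sInf S` lies in `S`, and the cdf is right continuous
  have hmem : p ≤ cdf μ (sInf S) := by
    refine ge_of_tendsto (((cdf μ).right_continuous _).mono Ioi_subset_Ici_self).tendsto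
      (eventually_nhdsWithin_of_forall fun x hx => ?_)
    obtain ⟨s, hs, hsx⟩ := exists_lt_of_csInf_lt hne hx
    exact hs.2.trans ((cdf μ).mono hsx.le)
  refine ⟨fun h => hmem.trans ((cdf μ).mono h), fun h => csInf_le hbdd ⟨?_, h⟩⟩
  by_contra! hy
  have : cdf μ y = 0 := by rw [← cdfR_eq_cdf hμ, cdfR, Icc_eq_empty_of_lt hy]; simp
  linarith

lemma quant_monotoneOn (hμ : MemM μ) : MonotoneOn (quant μ) (Ioo 0 1) := fun _ hp _ hq hpq =>
  (quant_le_iff hμ hp.1 hp.2 _).2 (hpq.trans ((quant_le_iff hμ hq.1 hq.2 _).1 le_rfl))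

end Quantile

section Coupling

variable {Ω α β γ δ : Type*} [MeasurableSpace Ω] [MeasurableSpace α] [MeasurableSpace β]
  [MeasurableSpace γ] [MeasurableSpace δ]

theorem MeasureTheory.Measure.map_prod_map_of_aemeasurable {μa : Measure α} {μc : Measure γ}
    [SFinite μa] [SFinite μc] {f : α → β} {g : γ → δ} (hf : AEMeasurable f μa)
    (hg : AEMeasurable g μc) :
    (μa.map f).prod (μc.map g) = (μa.prod μc).map (Prod.map f g) := by
  have hfg : Prod.map f g =ᵐ[μa.prod μc] Prod.map (hf.mk f) (hg.mk g) := by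
    filter_upwards [Measure.quasiMeasurePreserving_fst.ae_eq_comp hf.ae_eq_mk,
      Measure.quasiMeasurePreserving_snd.ae_eq_comp hg.ae_eq_mk] with z h₁ h₂
    exact Prod.ext h₁ h₂
  rw [Measure.map_congr hf.ae_eq_mk, Measure.map_congr hg.ae_eq_mk, Measure.map_congr hfg,
    Measure.map_prod_map _ _ hf.measurable_mk hg.measurable_mk]

lemma abs_integral_sub_integral_le {μ : Measure α} {f g h : α → ℝ} (hf : Integrable f μ)
    (hg : Integrable g μ) (hh : Integrable h μ) (hfg : ∀ x, |f x - g x| ≤ h x) :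
    |∫ x, f x ∂μ - ∫ x, g x ∂μ| ≤ ∫ x, h x ∂μ := by
  rw [← integral_sub hf hg]
  exact (abs_integral_le_integral_abs).trans (integral_mono (hf.sub hg).abs hh hfg)

variable {ρ : Measure Ω} {X Y : Ω → ℝ}

lemma abs_integral_map_sub_le (hX : Integrable X ρ) (hY : Integrable Y ρ) :
    |∫ x, x ∂(ρ.map X) - ∫ y, y ∂(ρ.map Y)| ≤ ∫ ω, |X ω - Y ω| ∂ρ := by
  rw [integral_map hX.aemeasurable continuous_id'.aestronglyMeasurable,
    integral_map hY.aemeasurable continuous_id'.aestronglyMeasurable]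
  exact abs_integral_sub_integral_le hX hY (hX.sub hY).abs fun _ => le_rfl

lemma abs_integral_abs_sub_map_sub_le [IsProbabilityMeasure ρ] (hX : Integrable X ρ)
    (hY : Integrable Y ρ) (a b : ℝ) :
    |∫ x, |x - a| ∂(ρ.map X) - ∫ y, |y - b| ∂(ρ.map Y)| ≤ ∫ ω, |X ω - Y ω| ∂ρ + |a - b| := by
  have hXY : Integrable (fun ω => |X ω - Y ω|) ρ := (hX.sub hY).abs
  have hconst : ∫ ω, |X ω - Y ω| + |a - b| ∂ρ = ∫ ω, |X ω - Y ω| ∂ρ + |a - b| := by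
    rw [integral_add hXY (integrable_const _), integral_const]
    simp
  have hcont : ∀ c : ℝ, Continuous fun x : ℝ => |x - c| := fun c => by fun_prop
  rw [integral_map hX.aemeasurable (hcont a).aestronglyMeasurable,
    integral_map hY.aemeasurable (hcont b).aestronglyMeasurable, ← hconst]
  refine abs_integral_sub_integral_le ((hX.sub (integrable_const a)).abs)
    ((hY.sub (integrable_const b)).abs) (hXY.add (integrable_const _)) fun ω => ?_
  calc |(|X ω - a|) - (|Y ω - b|)| ≤ |(X ω - a) - (Y ω - b)| := abs_abs_sub_abs_le_abs_sub _ _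
    _ = |(X ω - Y ω) - (a - b)| := by ring_nf
    _ ≤ |X ω - Y ω| + |a - b| := abs_sub _ _

lemma abs_integral_abs_sub_prod_map_sub_le [IsProbabilityMeasure ρ] (hX : Integrable X ρ)
    (hY : Integrable Y ρ) :
    |∫ z, |z.1 - z.2| ∂((ρ.map X).prod (ρ.map X)) - ∫ z, |z.1 - z.2| ∂((ρ.map Y).prod (ρ.map Y))|
      ≤ 2 * ∫ ω, |X ω - Y ω| ∂ρ := by
  have hcont : Continuous fun z : ℝ × ℝ => |z.1 - z.2| := by fun_prop
  rw [Measure.map_prod_map_of_aemeasurable hX.aemeasurable hX.aemeasurable,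
    Measure.map_prod_map_of_aemeasurable hY.aemeasurable hY.aemeasurable,
    integral_map (φ := Prod.map X X) (hX.aemeasurable.comp_fst.prodMk hX.aemeasurable.comp_snd)
      hcont.aestronglyMeasurable,
    integral_map (φ := Prod.map Y Y) (hY.aemeasurable.comp_fst.prodMk hY.aemeasurable.comp_snd)
      hcont.aestronglyMeasurable]
  have hXY : Integrable (fun ω => |X ω - Y ω|) ρ := (hX.sub hY).abs
  have hsum : ∫ z : Ω × Ω, |X z.1 - Y z.1| + |X z.2 - Y z.2| ∂(ρ.prod ρ)
      = 2 * ∫ ω, |X ω - Y ω| ∂ρ := by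
    rw [integral_add (hXY.comp_fst ρ) (hXY.comp_snd ρ), integral_fun_fst (fun ω => |X ω - Y ω|),
      integral_fun_snd (fun ω => |X ω - Y ω|)]
    simp [two_mul]
  rw [← hsum]
  refine abs_integral_sub_integral_le ((hX.comp_fst ρ).sub (hX.comp_snd ρ)).abs
    ((hY.comp_fst ρ).sub (hY.comp_snd ρ)).abs ((hXY.comp_fst ρ).add (hXY.comp_snd ρ))
    fun z => ?_
  calc |(|X z.1 - X z.2|) - (|Y z.1 - Y z.2|)| ≤ |(X z.1 - X z.2) - (Y z.1 - Y z.2)| :=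
        abs_abs_sub_abs_le_abs_sub _ _
    _ = |(X z.1 - Y z.1) - (X z.2 - Y z.2)| := by ring_nf
    _ ≤ |X z.1 - Y z.1| + |X z.2 - Y z.2| := abs_sub _ _

end Coupling

lemma abs_div_sub_div_le {a b c d : ℝ} (ha : 0 ≤ a) (hac : a ≤ c) (hc : 0 < c) (hd : 0 < d) :
    |a / c - b / d| ≤ (|a - b| + |c - d|) / d := by
  have hac' : |a / c| ≤ 1 := by
    rw [abs_of_nonneg (div_nonneg ha hc.le)]
    exact div_le_one_of_le₀ hac hc.le
  have key : a / c - b / d = ((a - b) + a / c * (d - c)) / d := by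
    field_simp
    ring
  rw [key, abs_div, abs_of_pos hd, abs_sub_comm c d]
  gcongr
  calc |(a - b) + a / c * (d - c)| ≤ |a - b| + |a / c| * |d - c| :=
        (abs_add_le _ _).trans_eq (by rw [abs_mul])
    _ ≤ |a - b| + 1 * |d - c| := by gcongr
    _ = |a - b| + |d - c| := by ring

section QuantileCoupling

variable {μ ν : Measure ℝ}

instance : IsProbabilityMeasure (volume.restrict (Ioc (0:ℝ) 1)) := ⟨by simp⟩

lemma aemeasurable_quant (hμ : MemM μ) : AEMeasurable (quant μ) (volume.restrict (Ioc 0 1)) := by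
  rw [← Measure.restrict_congr_set Ioo_ae_eq_Ioc]
  exact aemeasurable_restrict_of_monotoneOn measurableSet_Ioo (quant_monotoneOn hμ)

lemma map_quant (hμ : MemM μ) : (volume.restrict (Ioc (0:ℝ) 1)).map (quant μ) = μ := by
  have := hμ.1
  refine Measure.ext_of_Iic _ _ fun y => ?_
  have hpre : quant μ ⁻¹' Iic y =ᵐ[volume.restrict (Ioc 0 1)] Iic (cdf μ y) := by
    rw [← Measure.restrict_congr_set Ioo_ae_eq_Ioc]
    filter_upwards [ae_restrict_mem measurableSet_Ioo] with p hp
    exact propext (quant_le_iff hμ hp.1 hp.2 y)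
  rw [Measure.map_apply_of_aemeasurable (aemeasurable_quant hμ) measurableSet_Iic,
    measure_congr hpre, Measure.restrict_apply measurableSet_Iic,
    Iic_inter_Ioc_of_le (cdf_le_one μ y), Real.volume_Ioc, sub_zero, ofReal_cdf]

lemma integrable_quant (hμ : MemM μ) : IntegrableOn (quant μ) (Ioc 0 1) := by
  have h := hμ.2.2.1
  rw [← map_quant hμ] at h
  exact (integrable_map_measure h.aestronglyMeasurable (aemeasurable_quant hμ)).1 h

lemma intervalIntegrable_quant (hμ : MemM μ) : IntervalIntegrable (quant μ) volume 0 1 :=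
  (intervalIntegrable_iff_integrableOn_Ioc_of_le zero_le_one).2 (integrable_quant hμ)

lemma mMean_eq_integral_quant (hμ : MemM μ) : mMean μ = ∫ t in (0:ℝ)..1, quant μ t := by
  rw [intervalIntegral.integral_of_le zero_le_one, ← integral_map (aemeasurable_quant hμ)
    continuous_id'.aestronglyMeasurable, map_quant hμ, mMean]

lemma W1_eq_integral (μ ν : Measure ℝ) :
    W1 μ ν = ∫ t in Ioc (0:ℝ) 1, |quant μ t - quant ν t| :=
  intervalIntegral.integral_of_le zero_le_one

lemma abs_mMean_sub_le_W1 (hμ : MemM μ) (hν : MemM ν) : |mMean μ - mMean ν| ≤ W1 μ ν := by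
  have h := abs_integral_map_sub_le (integrable_quant hμ) (integrable_quant hν)
  rwa [map_quant hμ, map_quant hν, ← W1_eq_integral] at h

lemma abs_integral_abs_sub_mMean_sub_le (hμ : MemM μ) (hν : MemM ν) :
    |∫ x, |x - mMean μ| ∂μ - ∫ x, |x - mMean ν| ∂ν| ≤ 2 * W1 μ ν := by
  have h := abs_integral_abs_sub_map_sub_le (integrable_quant hμ) (integrable_quant hν)
    (mMean μ) (mMean ν)
  rw [map_quant hμ, map_quant hν, ← W1_eq_integral] at h
  linarith [abs_mMean_sub_le_W1 hμ hν]

lemma abs_integral_abs_sub_prod_sub_le (hμ : MemM μ) (hν : MemM ν) :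
    |∫ z, |z.1 - z.2| ∂(μ.prod μ) - ∫ z, |z.1 - z.2| ∂(ν.prod ν)| ≤ 2 * W1 μ ν := by
  have h := abs_integral_abs_sub_prod_map_sub_le (integrable_quant hμ) (integrable_quant hν)
  rwa [map_quant hμ, map_quant hν, ← W1_eq_integral] at h

lemma abs_lorenz_sub_le (hμ : MemM μ) (hν : MemM ν) {p : ℝ} (hp : p ∈ Icc (0:ℝ) 1) :
    |lorenz μ p - lorenz ν p| ≤ 2 * W1 μ ν / mMean ν := by
  have hQμ := intervalIntegrable_quant hμ
  have hQν := intervalIntegrable_quant hν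
  have hsub : uIcc 0 p ⊆ uIcc (0:ℝ) 1 := uIcc_subset_uIcc_left (by simpa [uIcc_of_le] using hp)
  have hnum : |(∫ t in (0:ℝ)..p, quant μ t) - ∫ t in (0:ℝ)..p, quant ν t| ≤ W1 μ ν := by
    rw [← intervalIntegral.integral_sub (hQμ.mono_set hsub) (hQν.mono_set hsub)]
    calc _ ≤ ∫ t in (0:ℝ)..p, |quant μ t - quant ν t| :=
          intervalIntegral.abs_integral_le_integral_abs hp.1
      _ ≤ W1 μ ν := intervalIntegral.integral_mono_interval le_rfl hp.1 hp.2
          (Eventually.of_forall fun _ => abs_nonneg _) (hQμ.sub hQν).abs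
  have hle_mean : ∫ t in (0:ℝ)..p, quant μ t ≤ mMean μ := by
    rw [mMean_eq_integral_quant hμ]
    exact intervalIntegral.integral_mono_interval le_rfl hp.1 hp.2
      (Eventually.of_forall (quant_nonneg μ)) hQμ
  calc |lorenz μ p - lorenz ν p|
      ≤ (W1 μ ν + W1 μ ν) / mMean ν := by
        refine (abs_div_sub_div_le (intervalIntegral.integral_nonneg hp.1 fun t _ =>
          quant_nonneg μ t) hle_mean hμ.2.2.2 hν.2.2.2).trans ?_
        exact div_le_div_of_nonneg_right (add_le_add hnum (abs_mMean_sub_le_W1 hμ hν))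
          hν.2.2.2.le
    _ = 2 * W1 μ ν / mMean ν := by ring

end QuantileCoupling

/-- If `W₁(μ_n, μ_∞) → 0` then the Lorenz curves converge uniformly on
`[0,1]` and the Gini and Hoover coefficients converge. -/
theorem lorenz_gini_hoover_tendsto_of_W1 (μs : ℕ → Measure ℝ) (ν : Measure ℝ)
    (h : ∀ n, MemM (μs n)) (hν : MemM ν)
    (hW : Tendsto (fun n => W1 (μs n) ν) atTop (𝓝 0)) :
    TendstoUniformlyOn (fun n p => lorenz (μs n) p) (lorenz ν) atTop (Set.Icc 0 1) ∧
    Tendsto (fun n => gini (μs n)) atTop (𝓝 (gini ν)) ∧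
    Tendsto (fun n => hoover (μs n)) atTop (𝓝 (hoover ν)) := by
  have tendsto_of_abs_sub_le : ∀ {f g : ℕ → ℝ} {a : ℝ}, Tendsto g atTop (𝓝 0) →
      (∀ n, |f n - a| ≤ g n) → Tendsto f atTop (𝓝 a) := fun hg hf =>
    tendsto_iff_norm_sub_tendsto_zero.2 (squeeze_zero (fun _ => norm_nonneg _) hf hg)
  have h2W : Tendsto (fun n => 2 * W1 (μs n) ν) atTop (𝓝 0) := by
    simpa using hW.const_mul 2
  have hmean : Tendsto (fun n => 2 * mMean (μs n)) atTop (𝓝 (2 * mMean ν)) :=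
    (tendsto_of_abs_sub_le hW fun n => abs_mMean_sub_le_W1 (h n) hν).const_mul 2
  have hmean_ne : 2 * mMean ν ≠ 0 := (mul_pos two_pos hν.2.2.2).ne'
  refine ⟨?_, ?_, ?_⟩
  · have hL : Tendsto (fun n => 2 * W1 (μs n) ν / mMean ν) atTop (𝓝 0) := by
      simpa using h2W.div_const (mMean ν)
    refine Metric.tendstoUniformlyOn_iff.2 fun ε hε => ?_
    filter_upwards [hL.eventually (gt_mem_nhds hε)] with n hn p hp
    rw [Real.dist_eq, abs_sub_comm]
    exact (abs_lorenz_sub_le (h n) hν hp).trans_lt hn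
  · exact (tendsto_of_abs_sub_le h2W fun n => abs_integral_abs_sub_prod_sub_le (h n) hν).div
      hmean hmean_ne
  · exact (tendsto_of_abs_sub_le h2W fun n => abs_integral_abs_sub_mMean_sub_le (h n) hν).div
      hmean hmean_ne
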